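/- arXiv:1508.03923 — 7 statements merged into one kernel-verified Lean document; each statement's English description precedes it below -/
import Mathlib

section
/- Let φ : V → V' be a rough isometry with constants α, β between bounded-degree graphs G and G'. Fix for each edge e = (u,v) of G a path Φ(u,v) in G' from φ(u) to φ(v) of length at most α + β. Then for every edge e' of G', the set of edges e of G such that the path Φ(e⁻, e⁺) traverses e' is contained in a ball of radius α(2α + 3β) in G. -/
/-- Given a rough isometry `φ` with constants `α, β` between bounded-degree
graphs `G, G'`, and a chosen path `Φ u v` in `G'` from `φ u` to `φ v` of length at most
`α + β` for each edge `(u,v)` of `G`, for every edge `e'` of `G'` the set of edges `e` of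
`G` whose path `Φ e⁻ e⁺` traverses `e'` is contained in a ball of radius `α(2α + 3β)` in `G`. -/
theorem rough_isometry_edge_preimage_in_ball {V V' : Type*}
    (G : SimpleGraph V) (G' : SimpleGraph V')
    (hG : G.Connected) (hG' : G'.Connected)
    [∀ v, Fintype (G.neighborSet v)] [∀ v', Fintype (G'.neighborSet v')]
    (DG DG' : ℕ) (hdegG : ∀ v, G.degree v ≤ DG) (hdegG' : ∀ v', G'.degree v' ≤ DG')
    (φ : V → V') (α β : ℝ) (hα : 0 < α) (hβ : 0 < β)
    (hlow : ∀ u v, α⁻¹ * (G.dist u v : ℝ) - β ≤ (G'.dist (φ u) (φ v) : ℝ))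
    (hupp : ∀ u v, (G'.dist (φ u) (φ v) : ℝ) ≤ α * (G.dist u v : ℝ) + β)
    (hsurj : ∀ v' : V', ∃ v : V, (G'.dist (φ v) v' : ℝ) ≤ β)
    (Φ : ∀ u v, G.Adj u v → G'.Walk (φ u) (φ v))
    (hΦ : ∀ u v (h : G.Adj u v), ((Φ u v h).length : ℝ) ≤ α + β) :
    ∀ a b : V', G'.Adj a b →
      ∃ w : V, ∀ u v (h : G.Adj u v),
        s(a, b) ∈ (Φ u v h).edges → (G.dist w u : ℝ) ≤ α * (2 * α + 3 * β) := by
  intro a b hab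
  classical
  obtain ⟨w, hw⟩ := hsurj a
  refine ⟨w, fun u v h hmem => ?_⟩
  -- a lies on the walk Φ u v h
  have ha : a ∈ (Φ u v h).support :=
    SimpleGraph.Walk.fst_mem_support_of_mem_edges _ hmem
  -- so dist (φ u) a ≤ length of the walk ≤ α + β
  have hd1 : (G'.dist (φ u) a : ℝ) ≤ α + β := by
    have hle : G'.dist (φ u) a ≤ ((Φ u v h).takeUntil a ha).length :=
      SimpleGraph.dist_le _
    have hle2 : ((Φ u v h).takeUntil a ha).length ≤ (Φ u v h).length :=
      SimpleGraph.Walk.length_takeUntil_le _ ha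
    calc (G'.dist (φ u) a : ℝ) ≤ ((Φ u v h).length : ℝ) := by exact_mod_cast hle.trans hle2
      _ ≤ α + β := hΦ u v h
  -- triangle inequality
  have htri : G'.dist (φ w) (φ u) ≤ G'.dist (φ w) a + G'.dist a (φ u) :=
    hG'.dist_triangle
  have hcomm : G'.dist a (φ u) = G'.dist (φ u) a := SimpleGraph.dist_comm
  have hbig : (G'.dist (φ w) (φ u) : ℝ) ≤ α + 2 * β := by
    have : (G'.dist (φ w) (φ u) : ℝ) ≤ (G'.dist (φ w) a : ℝ) + (G'.dist a (φ u) : ℝ) := by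
      exact_mod_cast htri
    rw [hcomm] at this
    linarith [hw, hd1]
  have hlw := hlow w u
  have hduv : (G.dist w u : ℝ) ≤ α * (α + 3 * β) := by
    have h1 : α⁻¹ * (G.dist w u : ℝ) ≤ α + 3 * β := by linarith
    have h2 : α * (α⁻¹ * (G.dist w u : ℝ)) ≤ α * (α + 3 * β) :=
      mul_le_mul_of_nonneg_left h1 hα.le
    rwa [← mul_assoc, mul_inv_cancel₀ hα.ne', one_mul] at h2
  nlinarith [hα, hβ, hduv]
end

section
/- Let φ : V → V' be a rough isometry between networks G and G' with bounded local geometry. Then there exists a constant C > 0 such that for every function f : V' → ℝ, the Dirichlet energy satisfies E_G(f ∘ φ) ≤ C · E_{G'}(f). -/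
open scoped Classical

open ENNReal

/-- The Dirichlet energy `E_G(f) = (1/2) Σ_e c(e) |f(e⁺) − f(e⁻)|²` of a function on a
network, where the sum ranges over ordered pairs of adjacent vertices (hence the 1/2). -/
noncomputable def dirichletEnergy {V : Type*} (G : SimpleGraph V) (c : V → V → ℝ)
    (f : V → ℝ) : ℝ≥0∞ :=
  (1 / 2) * ∑' p : V × V,
    if G.Adj p.1 p.2 then ENNReal.ofReal (c p.1 p.2 * (f p.1 - f p.2) ^ 2) else 0

section Aux

/-- Bounded-degree balls are covered by small finsets. -/
lemma ballCover {V : Type*} (G : SimpleGraph V) [∀ v, Fintype (G.neighborSet v)]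
    (hG : G.Preconnected) (m : ℕ) (hdeg : ∀ v, G.degree v ≤ m) (u₀ : V) :
    ∀ R : ℕ, ∃ s : Finset V, (∀ u, G.dist u₀ u ≤ R → u ∈ s) ∧ s.card ≤ (m + 1) ^ R := by
  intro R
  induction R with
  | zero =>
    refine ⟨{u₀}, ?_, by simp⟩
    intro u hu
    have h0 : G.dist u₀ u = 0 := Nat.le_zero.mp hu
    have := ((hG u₀ u).dist_eq_zero_iff).mp h0
    simp [this]
  | succ R ih =>
    obtain ⟨s, hs, hc⟩ := ih
    refine ⟨s.biUnion (fun v => insert v (G.neighborFinset v)), ?_, ?_⟩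
    · intro u hu
      obtain ⟨p, hp⟩ := (hG u u₀).exists_walk_length_eq_dist
      cases p with
      | nil =>
        have hu0 : u₀ ∈ s := hs u₀ (by simp [SimpleGraph.dist_self])
        exact Finset.mem_biUnion.mpr ⟨u₀, hu0, by simp⟩
      | @cons _ w _ h q =>
        have hq : G.dist u₀ w ≤ R := by
          have h1 : G.dist w u₀ ≤ q.length := SimpleGraph.dist_le q
          have h2 : q.length + 1 = G.dist u u₀ := by simpa using hp
          have h3 : G.dist u u₀ ≤ R + 1 := by rw [SimpleGraph.dist_comm]; exact hu
          rw [SimpleGraph.dist_comm]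
          omega
        refine Finset.mem_biUnion.mpr ⟨w, hs w hq, ?_⟩
        simp [SimpleGraph.mem_neighborFinset, h.symm]
    · calc (s.biUnion (fun v => insert v (G.neighborFinset v))).card
          ≤ ∑ v ∈ s, (insert v (G.neighborFinset v)).card := Finset.card_biUnion_le
        _ ≤ ∑ _v ∈ s, (m + 1) := by
            refine Finset.sum_le_sum fun v _ => ?_
            have := Finset.card_insert_le v (G.neighborFinset v)
            have h2 : (G.neighborFinset v).card = G.degree v := rfl
            have := hdeg v
            omega
        _ = s.card * (m + 1) := by simp [Finset.sum_const, Nat.smul_one_eq_cast, mul_comm]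
        _ ≤ (m + 1) ^ R * (m + 1) := Nat.mul_le_mul_right _ hc
        _ = (m + 1) ^ (R + 1) := (pow_succ _ _).symm

/-- The `i`-th vertex of a walk is within distance `i` of the start. -/
lemma distGetVert {V : Type*} {G : SimpleGraph V} :
    ∀ {u v : V} (p : G.Walk u v) (i : ℕ), G.dist u (p.getVert i) ≤ i := by
  have key : ∀ {u v : V} (p : G.Walk u v) (i : ℕ),
      ∃ q : G.Walk u (p.getVert i), q.length ≤ i := by
    intro u v p
    induction p with
    | nil =>
      intro i
      exact ⟨SimpleGraph.Walk.nil.copy rfl (by simp [SimpleGraph.Walk.getVert]), by simp⟩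
    | @cons a b _ h q ih =>
      intro i
      cases i with
      | zero =>
        exact ⟨SimpleGraph.Walk.nil.copy rfl (SimpleGraph.Walk.getVert_zero _).symm, by simp⟩
      | succ i =>
        obtain ⟨r, hr⟩ := ih i
        exact ⟨(SimpleGraph.Walk.cons h r).copy rfl
          (SimpleGraph.Walk.getVert_cons_succ _ _).symm, by simpa using hr⟩
  intro u v p i
  obtain ⟨q, hq⟩ := key p i
  exact le_trans (SimpleGraph.dist_le q) hq

/-- Multiplicity-counting comparison for `tsum`s in `ℝ≥0∞`. -/
lemma tsumCompLe {T B : Type*} (g : B → ℝ≥0∞) (h : T → B) (N : ℕ)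
    (hfib : ∀ b, (h ⁻¹' {b}).Finite ∧ Nat.card (h ⁻¹' {b}) ≤ N) :
    ∑' t, g (h t) ≤ N * ∑' b, g b := by
  rw [← ENNReal.tsum_fiberwise (fun t => g (h t)) h, ← ENNReal.tsum_mul_left]
  refine ENNReal.tsum_le_tsum fun b => ?_
  have hfin := (hfib b).1
  have hcard := (hfib b).2
  have : ∀ t : h ⁻¹' {b}, g (h t.1) = g b := fun t => by
    have : h t.1 = b := t.2
    rw [this]
  calc ∑' t : h ⁻¹' {b}, g (h t.1) = ∑' _t : h ⁻¹' {b}, g b := tsum_congr this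
    _ = Nat.card (h ⁻¹' {b}) * g b := by
        have : Fintype (h ⁻¹' {b}) := hfin.fintype
        rw [tsum_fintype, Finset.sum_const, Nat.card_eq_fintype_card, Finset.card_univ,
          nsmul_eq_mul]
    _ ≤ N * g b := mul_le_mul' (by exact_mod_cast hcard) le_rfl

end Aux

/-- If `φ : V → V'` is a rough isometry between networks `G, G'` with bounded
local geometry, then there is a constant `C > 0` with `E_G(f ∘ φ) ≤ C · E_{G'}(f)` for all
`f : V' → ℝ`. -/
theorem dirichletEnergy_comp_roughIsometry_le {V V' : Type*}
    (G : SimpleGraph V) (G' : SimpleGraph V')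
    (hG : G.Connected) (hG' : G'.Connected)
    [∀ v, Fintype (G.neighborSet v)] [∀ v', Fintype (G'.neighborSet v')]
    (c : V → V → ℝ) (c' : V' → V' → ℝ)
    (hcsymm : ∀ u v, c u v = c v u) (hcsymm' : ∀ u v, c' u v = c' v u)
    (M : ℝ) (hM : 1 ≤ M)
    (hdeg : ∀ v, (G.degree v : ℝ) ≤ M) (hdeg' : ∀ v', (G'.degree v' : ℝ) ≤ M)
    (hc : ∀ u v, G.Adj u v → M⁻¹ ≤ c u v ∧ c u v ≤ M)
    (hc' : ∀ u v, G'.Adj u v → M⁻¹ ≤ c' u v ∧ c' u v ≤ M)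
    (φ : V → V') (α β : ℝ) (hα : 0 < α) (hβ : 0 < β)
    (hlow : ∀ u v, α⁻¹ * (G.dist u v : ℝ) - β ≤ (G'.dist (φ u) (φ v) : ℝ))
    (hupp : ∀ u v, (G'.dist (φ u) (φ v) : ℝ) ≤ α * (G.dist u v : ℝ) + β)
    (hsurj : ∀ v' : V', ∃ v : V, (G'.dist (φ v) v' : ℝ) ≤ β) :
    ∃ C : ℝ≥0∞, 0 < C ∧ C < ⊤ ∧
      ∀ f : V' → ℝ, dirichletEnergy G c (f ∘ φ) ≤ C * dirichletEnergy G' c' f := by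
  classical
  have hM0 : (0:ℝ) < M := lt_of_lt_of_le one_pos hM
  set m : ℕ := ⌈M⌉₊ with hm
  have hdegm : ∀ v, G.degree v ≤ m := by
    intro v
    have h1 : (G.degree v : ℝ) ≤ (m : ℝ) := (hdeg v).trans (Nat.le_ceil M)
    exact_mod_cast h1
  set k : ℕ := ⌈α + β⌉₊ with hk
  have hk1 : 1 ≤ k := Nat.one_le_iff_ne_zero.mpr (by
    simp only [hk, ne_eq, Nat.ceil_eq_zero, not_le]
    linarith)
  have hdk : ∀ u v, G.Adj u v → G'.dist (φ u) (φ v) ≤ k := by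
    intro u v huv
    have h1 : G.dist u v = 1 := SimpleGraph.dist_eq_one_iff_adj.mpr huv
    have h2 := hupp u v
    rw [h1] at h2
    have h3 : (G'.dist (φ u) (φ v) : ℝ) ≤ (k : ℝ) := by
      have := Nat.le_ceil (α + β)
      push_cast at h2 ⊢
      linarith
    exact_mod_cast h3
  set S : Set (V × V) := {p : V × V | G.Adj p.1 p.2} with hS
  have hWex : ∀ p : S, ∃ w : G'.Walk (φ p.1.1) (φ p.1.2),
      w.length = G'.dist (φ p.1.1) (φ p.1.2) :=
    fun p => (hG'.preconnected _ _).exists_walk_length_eq_dist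
  choose W hWlen using hWex
  have hWk : ∀ p : S, (W p).length ≤ k := by
    intro p
    rw [hWlen p]
    exact hdk _ _ p.2
  set R : ℕ := ⌈α * (2 * k + β)⌉₊ + 1 with hR
  set N : ℕ := (m + 1) ^ R * ((m + 1) ^ R * k) with hN
  set K : ℝ≥0∞ := ENNReal.ofReal (M ^ 2 * k) with hK
  have hkR : (0:ℝ) < M ^ 2 * k := by
    have : (1:ℝ) ≤ (k:ℝ) := by exact_mod_cast hk1
    nlinarith
  have hN0 : 0 < N := by positivity
  refine ⟨K * N, ?_, ?_, ?_⟩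
  · refine ENNReal.mul_pos ?_ ?_
    · exact (ENNReal.ofReal_pos.mpr hkR).ne'
    · exact_mod_cast (Nat.cast_pos.mpr hN0).ne'
  · exact ENNReal.mul_lt_top ENNReal.ofReal_lt_top (ENNReal.natCast_lt_top N)
  intro f
  set e : V' × V' → ℝ≥0∞ := fun q =>
    if G'.Adj q.1 q.2 then ENNReal.ofReal (c' q.1 q.2 * (f q.1 - f q.2) ^ 2) else 0 with he
  set a : V × V → ℝ≥0∞ := fun p =>
    if G.Adj p.1 p.2 then
      ENNReal.ofReal (c p.1 p.2 * ((f ∘ φ) p.1 - (f ∘ φ) p.2) ^ 2) else 0 with ha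
  -- per-pair estimate
  have hstep : ∀ p : S, a p.1 ≤
      K * ∑ i ∈ Finset.range (W p).length, e ((W p).getVert i, (W p).getVert (i + 1)) := by
    intro p
    have hadj : G.Adj p.1.1 p.1.2 := p.2
    set n := (W p).length with hn
    set g : ℕ → ℝ := fun i => f ((W p).getVert i) with hg
    have hterm : ∀ i ∈ Finset.range n, (g (i + 1) - g i) ^ 2 ≤
        M * (c' ((W p).getVert i) ((W p).getVert (i + 1)) *
          (f ((W p).getVert i) - f ((W p).getVert (i + 1))) ^ 2) := by
      intro i hi
      have hlt : i < n := Finset.mem_range.mp hi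
      have hadj' : G'.Adj ((W p).getVert i) ((W p).getVert (i + 1)) :=
        (W p).adj_getVert_succ hlt
      have h1 : M⁻¹ ≤ c' ((W p).getVert i) ((W p).getVert (i + 1)) := (hc' _ _ hadj').1
      have h2 : (1 : ℝ) ≤ M * c' ((W p).getVert i) ((W p).getVert (i + 1)) := by
        calc (1 : ℝ) = M * M⁻¹ := (mul_inv_cancel₀ hM0.ne').symm
          _ ≤ _ := mul_le_mul_of_nonneg_left h1 hM0.le
      have h3 : (g (i + 1) - g i) ^ 2 =
          (f ((W p).getVert i) - f ((W p).getVert (i + 1))) ^ 2 := by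
        simp only [hg]; ring
      rw [h3, ← mul_assoc]
      exact le_mul_of_one_le_left (sq_nonneg _) h2
    have hnonneg : ∀ i ∈ Finset.range n,
        0 ≤ c' ((W p).getVert i) ((W p).getVert (i + 1)) *
          (f ((W p).getVert i) - f ((W p).getVert (i + 1))) ^ 2 := by
      intro i hi
      have hadj' := (W p).adj_getVert_succ (Finset.mem_range.mp hi)
      have h1 := (hc' _ _ hadj').1
      have h0 : (0:ℝ) ≤ c' ((W p).getVert i) ((W p).getVert (i + 1)) :=
        le_trans (inv_nonneg.mpr hM0.le) h1
      exact mul_nonneg h0 (sq_nonneg _)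
    have htel : f (φ p.1.1) - f (φ p.1.2) = -(∑ i ∈ Finset.range n, (g (i + 1) - g i)) := by
      rw [Finset.sum_range_sub g n]
      have h1 : g n = f (φ p.1.2) := by
        simp only [hg, hn, SimpleGraph.Walk.getVert_length]
      have h2 : g 0 = f (φ p.1.1) := by
        simp only [hg, SimpleGraph.Walk.getVert_zero]
      rw [h1, h2]; ring
    have hcs : (f (φ p.1.1) - f (φ p.1.2)) ^ 2 ≤
        (k : ℝ) * ∑ i ∈ Finset.range n, (g (i + 1) - g i) ^ 2 := by
      rw [htel, neg_sq]
      calc (∑ i ∈ Finset.range n, (g (i + 1) - g i)) ^ 2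
          ≤ (Finset.range n).card * ∑ i ∈ Finset.range n, (g (i + 1) - g i) ^ 2 :=
            sq_sum_le_card_mul_sum_sq
        _ = (n : ℝ) * ∑ i ∈ Finset.range n, (g (i + 1) - g i) ^ 2 := by
            rw [Finset.card_range]
        _ ≤ (k : ℝ) * ∑ i ∈ Finset.range n, (g (i + 1) - g i) ^ 2 := by
            apply mul_le_mul_of_nonneg_right
            · exact_mod_cast hWk p
            · exact Finset.sum_nonneg fun i _ => sq_nonneg _
    have hreal : c p.1.1 p.1.2 * (f (φ p.1.1) - f (φ p.1.2)) ^ 2 ≤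
        M ^ 2 * k * ∑ i ∈ Finset.range n, c' ((W p).getVert i) ((W p).getVert (i + 1)) *
          (f ((W p).getVert i) - f ((W p).getVert (i + 1))) ^ 2 := by
      have hsum1 : ∑ i ∈ Finset.range n, (g (i + 1) - g i) ^ 2 ≤
          M * ∑ i ∈ Finset.range n, c' ((W p).getVert i) ((W p).getVert (i + 1)) *
            (f ((W p).getVert i) - f ((W p).getVert (i + 1))) ^ 2 := by
        rw [Finset.mul_sum]; exact Finset.sum_le_sum hterm
      have hcuv : c p.1.1 p.1.2 ≤ M := (hc _ _ hadj).2
      calc c p.1.1 p.1.2 * (f (φ p.1.1) - f (φ p.1.2)) ^ 2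
          ≤ M * (f (φ p.1.1) - f (φ p.1.2)) ^ 2 :=
            mul_le_mul_of_nonneg_right hcuv (sq_nonneg _)
        _ ≤ M * ((k : ℝ) * ∑ i ∈ Finset.range n, (g (i + 1) - g i) ^ 2) :=
            mul_le_mul_of_nonneg_left hcs hM0.le
        _ ≤ M * ((k : ℝ) * (M * ∑ i ∈ Finset.range n,
              c' ((W p).getVert i) ((W p).getVert (i + 1)) *
                (f ((W p).getVert i) - f ((W p).getVert (i + 1))) ^ 2)) := by
            refine mul_le_mul_of_nonneg_left ?_ hM0.le
            exact mul_le_mul_of_nonneg_left hsum1 (Nat.cast_nonneg k)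
        _ = M ^ 2 * k * ∑ i ∈ Finset.range n,
              c' ((W p).getVert i) ((W p).getVert (i + 1)) *
                (f ((W p).getVert i) - f ((W p).getVert (i + 1))) ^ 2 := by ring
    have haeq : a p.1 = ENNReal.ofReal (c p.1.1 p.1.2 * (f (φ p.1.1) - f (φ p.1.2)) ^ 2) := by
      simp only [ha, if_pos hadj, Function.comp_apply]
    rw [haeq]
    calc ENNReal.ofReal (c p.1.1 p.1.2 * (f (φ p.1.1) - f (φ p.1.2)) ^ 2)
        ≤ ENNReal.ofReal (M ^ 2 * k * ∑ i ∈ Finset.range n,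
            c' ((W p).getVert i) ((W p).getVert (i + 1)) *
              (f ((W p).getVert i) - f ((W p).getVert (i + 1))) ^ 2) :=
          ENNReal.ofReal_le_ofReal hreal
      _ = K * ∑ i ∈ Finset.range n, e ((W p).getVert i, (W p).getVert (i + 1)) := by
          rw [ENNReal.ofReal_mul hkR.le, ENNReal.ofReal_sum_of_nonneg hnonneg]
          congr 1
          refine Finset.sum_congr rfl fun i hi => ?_
          simp only [he]
          rw [if_pos ((W p).adj_getVert_succ (Finset.mem_range.mp hi))]
  -- support restriction
  have hsub : ∑' p : V × V, a p = ∑' p : S, a p.1 := by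
    refine (tsum_subtype_eq_of_support_subset ?_).symm
    intro p hp
    by_contra hadj
    exact hp (if_neg hadj)
  -- sigma rewrite
  set h : (Σ p : S, Fin ((W p).length)) → V' × V' := fun t =>
    ((W t.1).getVert t.2.val, (W t.1).getVert (t.2.val + 1)) with hh
  have hsig : ∑' p : S, ∑ i ∈ Finset.range (W p).length,
      e ((W p).getVert i, (W p).getVert (i + 1))
      = ∑' t : Σ p : S, Fin ((W p).length), e (h t) := by
    rw [ENNReal.tsum_sigma']
    refine tsum_congr fun p => ?_
    rw [tsum_fintype]
    exact (Fin.sum_univ_eq_sum_range (fun i => e ((W p).getVert i, (W p).getVert (i + 1)))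
      (W p).length).symm ▸ rfl
  -- fiber bound
  have hfib : ∀ q : V' × V', (h ⁻¹' {q}).Finite ∧ Nat.card (h ⁻¹' {q}) ≤ N := by
    intro q
    by_cases hne : (h ⁻¹' {q}).Nonempty
    · obtain ⟨t₀, ht₀⟩ := hne
      have hdx : ∀ t : Σ p : S, Fin ((W p).length), h t = q →
          G'.dist (φ (t.1 : V × V).1) q.1 ≤ k := by
        intro t ht
        have h1 : (W t.1).getVert t.2.val = q.1 := congrArg Prod.fst ht
        have h2 := distGetVert (W t.1) t.2.val
        rw [h1] at h2
        exact le_trans h2 (le_trans (le_of_lt t.2.isLt) (hWk t.1))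
      have ht₀' : h t₀ = q := ht₀
      set u₁ : V := (t₀.1 : V × V).1 with hu₁
      have hx₀ : G'.dist (φ u₁) q.1 ≤ k := hdx t₀ ht₀'
      have hball : ∀ t : Σ p : S, Fin ((W p).length), h t = q →
          G.dist u₁ (t.1 : V × V).1 ≤ R ∧ G.dist u₁ (t.1 : V × V).2 ≤ R := by
        intro t ht
        have h1 : G'.dist (φ (t.1 : V × V).1) q.1 ≤ k := hdx t ht
        have h2 : G'.dist (φ u₁) (φ (t.1 : V × V).1) ≤ 2 * k := by
          calc G'.dist (φ u₁) (φ (t.1 : V × V).1)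
              ≤ G'.dist (φ u₁) q.1 + G'.dist q.1 (φ (t.1 : V × V).1) := hG'.dist_triangle
            _ ≤ k + k := by
                refine Nat.add_le_add hx₀ ?_
                rw [SimpleGraph.dist_comm]
                exact h1
            _ = 2 * k := (two_mul k).symm
        have h3 : (G.dist u₁ (t.1 : V × V).1 : ℝ) ≤ α * (2 * k + β) := by
          have hl := hlow u₁ (t.1 : V × V).1
          have h2' : (G'.dist (φ u₁) (φ (t.1 : V × V).1) : ℝ) ≤ 2 * k := by
            exact_mod_cast h2
          have h5 : α⁻¹ * (G.dist u₁ (t.1 : V × V).1 : ℝ) ≤ 2 * k + β := by linarith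
          calc (G.dist u₁ (t.1 : V × V).1 : ℝ)
              = α * (α⁻¹ * (G.dist u₁ (t.1 : V × V).1 : ℝ)) := by field_simp
            _ ≤ α * (2 * k + β) := mul_le_mul_of_nonneg_left h5 hα.le
        have h4 : G.dist u₁ (t.1 : V × V).1 + 1 ≤ R := by
          have h6 : (G.dist u₁ (t.1 : V × V).1 : ℝ) ≤ (⌈α * (2 * (k : ℝ) + β)⌉₊ : ℝ) :=
            le_trans h3 (Nat.le_ceil _)
          have h7 : G.dist u₁ (t.1 : V × V).1 ≤ ⌈α * (2 * (k : ℝ) + β)⌉₊ := by exact_mod_cast h6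
          omega
        refine ⟨by omega, ?_⟩
        have hadj : G.Adj (t.1 : V × V).1 (t.1 : V × V).2 := t.1.2
        have hd1 : G.dist (t.1 : V × V).1 (t.1 : V × V).2 = 1 :=
          SimpleGraph.dist_eq_one_iff_adj.mpr hadj
        calc G.dist u₁ (t.1 : V × V).2
            ≤ G.dist u₁ (t.1 : V × V).1 + G.dist (t.1 : V × V).1 (t.1 : V × V).2 :=
              hG.dist_triangle
          _ ≤ R := by omega
      obtain ⟨s, hscov, hscard⟩ := ballCover G hG.preconnected m hdegm u₁ R
      have hik : ∀ t : Σ p : S, Fin ((W p).length), t.2.val < k :=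
        fun t => lt_of_lt_of_le t.2.isLt (hWk t.1)
      set F : (h ⁻¹' {q}) → (↥s × ↥s × Fin k) := fun t =>
        (⟨(t.1.1 : V × V).1, hscov _ (hball t.1 t.2).1⟩,
         ⟨(t.1.1 : V × V).2, hscov _ (hball t.1 t.2).2⟩,
         ⟨t.1.2.val, hik t.1⟩) with hF
      have hFinj : Function.Injective F := by
        intro t t' heq
        simp only [hF, Prod.mk.injEq, Subtype.mk.injEq, Fin.mk.injEq] at heq
        obtain ⟨h1, h2, h3⟩ := heq
        apply Subtype.ext
        have hp : t.1.1 = t'.1.1 := Subtype.ext (Prod.ext h1 h2)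
        obtain ⟨⟨p, i⟩, ht⟩ := t
        obtain ⟨⟨p', i'⟩, ht'⟩ := t'
        simp only at hp h3 ⊢
        subst hp
        exact congrArg (Sigma.mk p) (Fin.ext h3)
      have hfin' : Finite (h ⁻¹' {q}) := Finite.of_injective F hFinj
      refine ⟨Set.finite_coe_iff.mp hfin', ?_⟩
      calc Nat.card (h ⁻¹' {q}) ≤ Nat.card (↥s × ↥s × Fin k) :=
            Nat.card_le_card_of_injective F hFinj
        _ = s.card * (s.card * k) := by
            simp [Nat.card_prod, Nat.card_eq_fintype_card, Fintype.card_coe, Fintype.card_fin]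
        _ ≤ N := by
            have h8 : s.card ≤ (m + 1) ^ R := hscard
            exact Nat.mul_le_mul h8 (Nat.mul_le_mul h8 le_rfl)
    · rw [Set.not_nonempty_iff_eq_empty] at hne
      rw [hne]
      simp
  have hcount : ∑' t, e (h t) ≤ (N : ℝ≥0∞) * ∑' q, e q := tsumCompLe e h N hfib
  calc dirichletEnergy G c (f ∘ φ) = (1 / 2) * ∑' p : V × V, a p := rfl
    _ = (1 / 2) * ∑' p : S, a p.1 := by rw [hsub]
    _ ≤ (1 / 2) * ∑' p : S, (K * ∑ i ∈ Finset.range (W p).length,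
          e ((W p).getVert i, (W p).getVert (i + 1))) :=
        mul_le_mul' le_rfl (ENNReal.tsum_le_tsum hstep)
    _ = (1 / 2) * (K * ∑' p : S, ∑ i ∈ Finset.range (W p).length,
          e ((W p).getVert i, (W p).getVert (i + 1))) := by rw [ENNReal.tsum_mul_left]
    _ = (1 / 2) * (K * ∑' t : Σ p : S, Fin ((W p).length), e (h t)) := by rw [hsig]
    _ ≤ (1 / 2) * (K * ((N : ℝ≥0∞) * ∑' q, e q)) :=
        mul_le_mul' le_rfl (mul_le_mul' le_rfl hcount)
    _ = (K * N) * ((1 / 2) * ∑' q, e q) := by ring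
    _ = (K * N) * dirichletEnergy G' c' f := rfl
end

section
/- Let φ : V → V' be a rough isometry between networks G and G' with bounded local geometry. Then there exists a constant C > 0 such that for every pair of vertex sets A, B ⊆ V, the free effective conductances satisfy C^F_eff(A ↔ B; G) ≤ C · C^F_eff(φ(A) ↔ φ(B); G'). -/
open scoped Classical

open ENNReal

/-- The free effective conductance between vertex sets `A` and `B`:
the infimum of Dirichlet energies of functions equal to 1 on `A` and 0 on `B`. -/
noncomputable def freeEffCond {V : Type*} (G : SimpleGraph V) (c : V → V → ℝ)
    (A B : Set V) : ℝ≥0∞ :=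
  ⨅ (F : V → ℝ) (_ : ∀ a ∈ A, F a = 1) (_ : ∀ b ∈ B, F b = 0), dirichletEnergy G c F

/-!
Send each edge `uv` of `G` to a geodesic of `G'` from `φ u` to `φ v`; by the upper rough-isometry
bound it has length at most `k = ⌈α + β⌉`, so Cauchy–Schwarz along it bounds the energy of `f ∘ φ`
across `uv` by `k M²` times the energy of `f` along the geodesic. A fixed dart of `G'` lies only on
geodesics of edges whose initial vertices are mapped within `k` of it; by the lower bound these
vertices lie in a `G`-ball of radius `r = ⌈α (2k + β)⌉`, which has at most `(D + 1) ^ r` vertices,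
each the tail of at most `D` darts. Hence `E_G(f ∘ φ) ≤ C E_G'(f)` for every `f`, and pulling
admissible functions back along `φ` compares the free effective conductances.
-/

open SimpleGraph

lemma List.sq_sum_le_length_mul_sum_sq (l : List ℝ) :
    l.sum ^ 2 ≤ l.length * (l.map (· ^ 2)).sum := by
  simpa [Fin.sum_univ_getElem, Fin.sum_univ_fun_getElem l (· ^ 2)] using
    sq_sum_le_card_mul_sum_sq (s := Finset.univ) (f := fun i : Fin l.length => l[(i : ℕ)])

lemma ENNReal.ofReal_list_sum_of_nonneg {l : List ℝ} (h : ∀ x ∈ l, 0 ≤ x) :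
    ENNReal.ofReal l.sum = (l.map ENNReal.ofReal).sum := by
  induction l with
  | nil => simp
  | cons a t ih =>
    simp only [List.forall_mem_cons] at h
    rw [List.sum_cons, List.map_cons, List.sum_cons,
      ENNReal.ofReal_add h.1 (List.sum_nonneg h.2), ih h.2]

lemma List.sum_map_eq_tsum_count {X : Type*} [DecidableEq X] (l : List X) (g : X → ℝ≥0∞) :
    (l.map g).sum = ∑' x, l.count x * g x := by
  rw [Finset.sum_list_map_count, tsum_eq_sum (s := l.toFinset)]
  · simp only [nsmul_eq_mul]
  · intro x hx
    rw [List.count_eq_zero.mpr (by simpa using hx), Nat.cast_zero, zero_mul]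

namespace SimpleGraph

variable {V : Type*} {G : SimpleGraph V}

lemma Walk.sub_eq_sum_darts (f : V → ℝ) {x y : V} (p : G.Walk x y) :
    f x - f y = (p.darts.map fun d => f d.fst - f d.snd).sum := by
  induction p with
  | nil => simp
  | cons h p ih => simp only [Walk.darts_cons, List.map_cons, List.sum_cons, ← ih]; ring

lemma Walk.sq_sub_le_length_mul_sum_darts (f : V → ℝ) {x y : V} (p : G.Walk x y) :
    (f x - f y) ^ 2 ≤ p.length * (p.darts.map fun d => (f d.fst - f d.snd) ^ 2).sum := by
  simpa [← p.sub_eq_sum_darts, Function.comp_def] using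
    (p.darts.map fun d => f d.fst - f d.snd).sq_sum_le_length_mul_sum_sq

lemma Walk.dist_fst_le_length_of_mem_darts {x y : V} (p : G.Walk x y) {d : G.Dart}
    (hd : d ∈ p.darts) : G.dist x d.fst ≤ p.length :=
  have hmem := p.dart_fst_mem_support_of_mem_darts hd
  (dist_le (p.takeUntil d.fst hmem)).trans (p.length_takeUntil_le_length hmem)

lemma Connected.exists_adj_dist_lt (hG : G.Connected) {u₀ u : V} (h : G.dist u₀ u ≠ 0) :
    ∃ v, G.Adj v u ∧ G.dist u₀ v < G.dist u₀ u := by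
  obtain ⟨p, hp⟩ := hG.exists_walk_length_eq_dist u₀ u
  have hnil : ¬p.Nil := fun hnil => h (hp ▸ Walk.length_eq_zero_iff.mpr hnil)
  refine ⟨p.penultimate, Walk.adj_penultimate hnil, ?_⟩
  calc G.dist u₀ p.penultimate ≤ p.dropLast.length := dist_le _
    _ < G.dist u₀ u := by rw [Walk.length_dropLast, hp]; omega

lemma Connected.exists_finset_dist_le_card_le [∀ v, Fintype (G.neighborSet v)]
    (hG : G.Connected) {D : ℕ} (hdeg : ∀ v, G.degree v ≤ D) (u₀ : V) (r : ℕ) :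
    ∃ S : Finset V, (∀ u, G.dist u₀ u ≤ r → u ∈ S) ∧ S.card ≤ (D + 1) ^ r := by
  induction r with
  | zero =>
    refine ⟨{u₀}, fun u hu => ?_, by simp⟩
    rw [Finset.mem_singleton, ← hG.dist_eq_zero_iff.mp (Nat.le_zero.mp hu)]
  | succ r ih =>
    obtain ⟨S, hS, hcard⟩ := ih
    refine ⟨S.biUnion fun v => insert v (G.neighborFinset v), fun u hu => ?_, ?_⟩
    · rcases Nat.eq_zero_or_pos (G.dist u₀ u) with h | h
      · exact Finset.mem_biUnion.mpr ⟨u, hS u (by omega), Finset.mem_insert_self _ _⟩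
      · obtain ⟨v, hvu, hv⟩ := hG.exists_adj_dist_lt h.ne'
        exact Finset.mem_biUnion.mpr
          ⟨v, hS v (by omega), Finset.mem_insert_of_mem ((G.mem_neighborFinset v u).mpr hvu)⟩
    · calc (S.biUnion fun v => insert v (G.neighborFinset v)).card
          ≤ ∑ v ∈ S, (insert v (G.neighborFinset v)).card := Finset.card_biUnion_le
        _ ≤ ∑ _v ∈ S, (D + 1) := Finset.sum_le_sum fun v _ =>
            (Finset.card_insert_le _ _).trans (Nat.succ_le_succ (hdeg v))
        _ ≤ (D + 1) ^ (r + 1) := by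
            rw [Finset.sum_const, smul_eq_mul, pow_succ]
            exact Nat.mul_le_mul_right _ hcard

def dartEquivSigma (G : SimpleGraph V) : G.Dart ≃ Σ v, G.neighborSet v where
  toFun d := ⟨d.fst, d.snd, d.adj⟩
  invFun s := ⟨(s.1, s.2), s.2.2⟩
  left_inv _ := rfl
  right_inv _ := rfl

lemma tsum_dart_indicator_fst [∀ v, Fintype (G.neighborSet v)] (S : Finset V) :
    ∑' d : G.Dart, (S : Set V).indicator 1 d.fst = ∑ v ∈ S, (G.degree v : ℝ≥0∞) := by
  rw [← G.dartEquivSigma.symm.tsum_eq, ENNReal.tsum_sigma', sum_eq_tsum_indicator]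
  refine tsum_congr fun v => ?_
  simp only [dartEquivSigma, Equiv.coe_fn_symm_mk]
  rw [tsum_fintype, Finset.sum_const, Finset.card_univ, card_neighborSet_eq_degree, nsmul_eq_mul]
  by_cases hv : v ∈ S <;> simp [hv]

noncomputable def dartEnergy (c : V → V → ℝ) (f : V → ℝ) (d : G.Dart) : ℝ≥0∞ :=
  ENNReal.ofReal (c d.fst d.snd * (f d.fst - f d.snd) ^ 2)

lemma dirichletEnergy_eq_tsum_dartEnergy (c : V → V → ℝ) (f : V → ℝ) :
    dirichletEnergy G c f = 1 / 2 * ∑' d : G.Dart, dartEnergy c f d := by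
  let e : G.Dart ≃ {p : V × V // G.Adj p.1 p.2} :=
    ⟨fun d => ⟨d.toProd, d.adj⟩, fun p => ⟨p.1, p.2⟩, fun _ => rfl, fun _ => rfl⟩
  exact congrArg _ ((tsum_subtype {p : V × V | G.Adj p.1 p.2} _).symm.trans (e.tsum_eq _).symm)

lemma Walk.ofReal_mul_sq_sub_le {M a : ℝ} (hM : 0 < M) (ha : a ≤ M) {c : V → V → ℝ}
    (hc : ∀ u v, G.Adj u v → M⁻¹ ≤ c u v) (f : V → ℝ) {x y : V} (p : G.Walk x y) :
    ENNReal.ofReal (a * (f x - f y) ^ 2)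
      ≤ ENNReal.ofReal (p.length * M ^ 2) * (p.darts.map (dartEnergy c f)).sum := by
  have hc₀ : ∀ d : G.Dart, 0 ≤ c d.fst d.snd * (f d.fst - f d.snd) ^ 2 := fun d =>
    mul_nonneg ((inv_nonneg.mpr hM.le).trans (hc _ _ d.adj)) (sq_nonneg _)
  have hsq : ∀ d : G.Dart,
      (f d.fst - f d.snd) ^ 2 ≤ M * (c d.fst d.snd * (f d.fst - f d.snd) ^ 2) := fun d => by
      have : 1 ≤ M * c d.fst d.snd := by
        simpa [hM.ne'] using mul_le_mul_of_nonneg_left (hc _ _ d.adj) hM.le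
      nlinarith [sq_nonneg (f d.fst - f d.snd)]
  set E := (p.darts.map fun d => c d.fst d.snd * (f d.fst - f d.snd) ^ 2).sum
  have hpath : (f x - f y) ^ 2 ≤ p.length * (M * E) := by
    refine (p.sq_sub_le_length_mul_sum_darts f).trans
      (mul_le_mul_of_nonneg_left ?_ (by positivity))
    rw [← List.sum_map_mul_left]
    exact List.sum_le_sum fun d _ => hsq d
  calc ENNReal.ofReal (a * (f x - f y) ^ 2) ≤ ENNReal.ofReal (p.length * M ^ 2 * E) := by
        refine ENNReal.ofReal_le_ofReal ?_
        calc a * (f x - f y) ^ 2 ≤ M * (p.length * (M * E)) :=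
              mul_le_mul ha hpath (sq_nonneg _) hM.le
          _ = p.length * M ^ 2 * E := by ring
    _ = _ := by
        rw [ENNReal.ofReal_mul (by positivity), ENNReal.ofReal_list_sum_of_nonneg, List.map_map]
        · rfl
        · simpa using fun d _ => hc₀ d

end SimpleGraph

section Comparison

variable {V V' : Type*} {G : SimpleGraph V} {G' : SimpleGraph V'} {φ : V → V'}

lemma tsum_count_darts_le [∀ v, Fintype (G.neighborSet v)] (hG : G.Connected)
    (hG' : G'.Connected) {D k r : ℕ} (hdeg : ∀ v, G.degree v ≤ D)
    (hr : ∀ u v, G'.dist (φ u) (φ v) ≤ 2 * k → G.dist u v ≤ r)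
    (w : ∀ e : G.Dart, G'.Walk (φ e.fst) (φ e.snd)) (hw : ∀ e, (w e).length ≤ k)
    (d : G'.Dart) :
    ∑' e, ((w e).darts.count d : ℝ≥0∞) ≤ k * ((D + 1) ^ r * D) := by
  by_cases h : ∃ e₀, d ∈ (w e₀).darts
  swap
  · push Not at h
    simp [List.count_eq_zero.mpr (h _)]
  obtain ⟨e₀, he₀⟩ := h
  obtain ⟨S, hS, hcard⟩ := hG.exists_finset_dist_le_card_le hdeg e₀.fst r
  have hfst : ∀ e, d ∈ (w e).darts → e.fst ∈ S := fun e he => hS _ <| hr _ _ <|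
    calc G'.dist (φ e₀.fst) (φ e.fst) ≤ G'.dist (φ e₀.fst) d.fst + G'.dist d.fst (φ e.fst) :=
          hG'.dist_triangle
      _ ≤ k + k := by
          rw [dist_comm (u := d.fst)]
          exact add_le_add (((w e₀).dist_fst_le_length_of_mem_darts he₀).trans (hw e₀))
            (((w e).dist_fst_le_length_of_mem_darts he).trans (hw e))
      _ = 2 * k := (two_mul k).symm
  calc ∑' e, ((w e).darts.count d : ℝ≥0∞)
      ≤ ∑' e : G.Dart, (k : ℝ≥0∞) * (S : Set V).indicator 1 e.fst := by
        refine ENNReal.tsum_le_tsum fun e => ?_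
        by_cases he : d ∈ (w e).darts
        · rw [Set.indicator_of_mem (hfst e he), Pi.one_apply, mul_one, Nat.cast_le]
          exact List.count_le_length.trans ((w e).length_darts.trans_le (hw e))
        · simp [List.count_eq_zero.mpr he]
    _ = k * ∑ v ∈ S, (G.degree v : ℝ≥0∞) := by
        rw [ENNReal.tsum_mul_left, tsum_dart_indicator_fst]
    _ ≤ k * ((D + 1) ^ r * D) := by
        grw [Finset.sum_le_sum fun v _ => (Nat.cast_le.mpr (hdeg v) : (G.degree v : ℝ≥0∞) ≤ D),
          Finset.sum_const, nsmul_eq_mul]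
        gcongr
        exact_mod_cast hcard

theorem dirichletEnergy_comp_le [∀ v, Fintype (G.neighborSet v)] (hG : G.Connected)
    (hG' : G'.Connected) {c : V → V → ℝ} {c' : V' → V' → ℝ} {M : ℝ} (hM : 0 < M)
    (hc : ∀ u v, G.Adj u v → c u v ≤ M) (hc' : ∀ u v, G'.Adj u v → M⁻¹ ≤ c' u v)
    {D k r : ℕ} (hdeg : ∀ v, G.degree v ≤ D)
    (hk : ∀ u v, G.Adj u v → G'.dist (φ u) (φ v) ≤ k)
    (hr : ∀ u v, G'.dist (φ u) (φ v) ≤ 2 * k → G.dist u v ≤ r) (f : V' → ℝ) :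
    dirichletEnergy G c (f ∘ φ)
      ≤ ENNReal.ofReal (k * M ^ 2) * (k * ((D + 1) ^ r * D)) * dirichletEnergy G' c' f := by
  choose w hw using fun e : G.Dart => hG'.exists_walk_length_eq_dist (φ e.fst) (φ e.snd)
  have hwk : ∀ e, (w e).length ≤ k := fun e => (hw e).trans_le (hk _ _ e.adj)
  rw [dirichletEnergy_eq_tsum_dartEnergy, dirichletEnergy_eq_tsum_dartEnergy, mul_left_comm]
  gcongr
  calc ∑' e, dartEnergy c (f ∘ φ) e
      ≤ ∑' e, ENNReal.ofReal (k * M ^ 2) * ((w e).darts.map (dartEnergy c' f)).sum :=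
        ENNReal.tsum_le_tsum fun e => ((w e).ofReal_mul_sq_sub_le hM (hc _ _ e.adj) hc' f).trans
          (by gcongr; exact_mod_cast hwk e)
    _ = ENNReal.ofReal (k * M ^ 2) *
          ∑' d, (∑' e, ((w e).darts.count d : ℝ≥0∞)) * dartEnergy c' f d := by
        simp_rw [List.sum_map_eq_tsum_count, ← ENNReal.tsum_mul_right]
        rw [ENNReal.tsum_mul_left, ENNReal.tsum_comm]
    _ ≤ ENNReal.ofReal (k * M ^ 2) * ∑' d, (k * ((D + 1) ^ r * D)) * dartEnergy c' f d := by
        gcongr with d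
        exact tsum_count_darts_le hG hG' hdeg hr w hwk d
    _ = _ := by rw [ENNReal.tsum_mul_left]; ring

lemma freeEffCond_le_mul_of_dirichletEnergy_comp_le {c : V → V → ℝ} {c' : V' → V' → ℝ}
    {C : ℝ≥0∞} (hC₀ : C ≠ 0) (hC : C ≠ ⊤)
    (h : ∀ f, dirichletEnergy G c (f ∘ φ) ≤ C * dirichletEnergy G' c' f) (A B : Set V) :
    freeEffCond G c A B ≤ C * freeEffCond G' c' (φ '' A) (φ '' B) := by
  simp only [freeEffCond, ENNReal.mul_iInf_of_ne hC₀ hC]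
  refine le_iInf fun f => le_iInf fun hA => le_iInf fun hB => ?_
  exact (iInf_le _ (f ∘ φ)).trans <|
    (iInf_le _ fun a ha => hA _ (Set.mem_image_of_mem φ ha)).trans <|
    (iInf_le _ fun b hb => hB _ (Set.mem_image_of_mem φ hb)).trans (h f)

lemma dist_map_le_ceil_of_adj {α β : ℝ}
    (hupp : ∀ u v, (G'.dist (φ u) (φ v) : ℝ) ≤ α * (G.dist u v : ℝ) + β) {u v : V}
    (h : G.Adj u v) : G'.dist (φ u) (φ v) ≤ ⌈α + β⌉₊ := by
  have := hupp u v
  rw [dist_eq_one_iff_adj.mpr h, Nat.cast_one, mul_one] at this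
  exact Nat.cast_le.mp (this.trans (Nat.le_ceil _))

lemma dist_le_ceil_of_dist_map_le {α β : ℝ} (hα : 0 < α)
    (hlow : ∀ u v, α⁻¹ * (G.dist u v : ℝ) - β ≤ (G'.dist (φ u) (φ v) : ℝ)) {u v : V} {s : ℕ}
    (h : G'.dist (φ u) (φ v) ≤ s) : G.dist u v ≤ ⌈α * (s + β)⌉₊ := by
  have hs : (G'.dist (φ u) (φ v) : ℝ) ≤ s := by exact_mod_cast h
  have : (G.dist u v : ℝ) ≤ α * (s + β) := by
    rw [← inv_mul_le_iff₀ hα]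
    linarith [hlow u v]
  exact Nat.cast_le.mp (this.trans (Nat.le_ceil _))

end Comparison

theorem freeEffCond_roughIsometry_le_general {V V' : Type*}
    (G : SimpleGraph V) (G' : SimpleGraph V')
    (hG : G.Connected) (hG' : G'.Connected)
    [∀ v, Fintype (G.neighborSet v)]
    (c : V → V → ℝ) (c' : V' → V' → ℝ)
    (M : ℝ) (hM : 1 ≤ M)
    (hdeg : ∀ v, (G.degree v : ℝ) ≤ M)
    (hc : ∀ u v, G.Adj u v → M⁻¹ ≤ c u v ∧ c u v ≤ M)
    (hc' : ∀ u v, G'.Adj u v → M⁻¹ ≤ c' u v ∧ c' u v ≤ M)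
    (φ : V → V') (α β : ℝ) (hα : 0 < α) (hβ : 0 < β)
    (hlow : ∀ u v, α⁻¹ * (G.dist u v : ℝ) - β ≤ (G'.dist (φ u) (φ v) : ℝ))
    (hupp : ∀ u v, (G'.dist (φ u) (φ v) : ℝ) ≤ α * (G.dist u v : ℝ) + β) :
    ∃ C : ℝ≥0∞, 0 < C ∧ C < ⊤ ∧
      ∀ A B : Set V, freeEffCond G c A B ≤ C * freeEffCond G' c' (φ '' A) (φ '' B) := by
  set k := ⌈α + β⌉₊
  set r := ⌈α * ((2 * k : ℕ) + β)⌉₊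
  set D := ⌈M⌉₊
  have hk : k ≠ 0 := by positivity
  have hD : D ≠ 0 := by positivity
  have hC₀ : ENNReal.ofReal (k * M ^ 2) * (k * ((D + 1) ^ r * D)) ≠ 0 := by
    simp [hk, hD, ENNReal.ofReal_eq_zero]; positivity
  refine ⟨_, pos_iff_ne_zero.mpr hC₀, by finiteness,
    freeEffCond_le_mul_of_dirichletEnergy_comp_le hC₀ (by finiteness) fun f => ?_⟩
  exact dirichletEnergy_comp_le hG hG' (by linarith) (fun u v h => (hc u v h).2)
    (fun u v h => (hc' u v h).1) (fun v => Nat.cast_le.mp ((hdeg v).trans (Nat.le_ceil M)))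
    (fun u v h => dist_map_le_ceil_of_adj hupp h)
    (fun u v h => dist_le_ceil_of_dist_map_le hα hlow h) f

/-- If `φ` is a rough isometry between networks with bounded local geometry,
there is `C > 0` with `C^F_eff(A ↔ B; G) ≤ C · C^F_eff(φ(A) ↔ φ(B); G')` for all `A, B`. -/
theorem freeEffCond_roughIsometry_le {V V' : Type*}
    (G : SimpleGraph V) (G' : SimpleGraph V')
    (hG : G.Connected) (hG' : G'.Connected)
    [∀ v, Fintype (G.neighborSet v)] [∀ v', Fintype (G'.neighborSet v')]
    (c : V → V → ℝ) (c' : V' → V' → ℝ)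
    (hcsymm : ∀ u v, c u v = c v u) (hcsymm' : ∀ u v, c' u v = c' v u)
    (M : ℝ) (hM : 1 ≤ M)
    (hdeg : ∀ v, (G.degree v : ℝ) ≤ M) (hdeg' : ∀ v', (G'.degree v' : ℝ) ≤ M)
    (hc : ∀ u v, G.Adj u v → M⁻¹ ≤ c u v ∧ c u v ≤ M)
    (hc' : ∀ u v, G'.Adj u v → M⁻¹ ≤ c' u v ∧ c' u v ≤ M)
    (φ : V → V') (α β : ℝ) (hα : 0 < α) (hβ : 0 < β)
    (hlow : ∀ u v, α⁻¹ * (G.dist u v : ℝ) - β ≤ (G'.dist (φ u) (φ v) : ℝ))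
    (hupp : ∀ u v, (G'.dist (φ u) (φ v) : ℝ) ≤ α * (G.dist u v : ℝ) + β)
    (hsurj : ∀ v' : V', ∃ v : V, (G'.dist (φ v) v' : ℝ) ≤ β) :
    ∃ C : ℝ≥0∞, 0 < C ∧ C < ⊤ ∧
      ∀ A B : Set V, freeEffCond G c A B ≤ C * freeEffCond G' c' (φ '' A) (φ '' B) :=
  freeEffCond_roughIsometry_le_general G G' hG hG' c c' M hM hdeg hc hc' φ α β hα hβ hlow hupp
end

section
/- Let (V, P) be a Markov chain with a state ρ from which every state is reachable, let h be a bounded harmonic function, let ⟨X_n⟩ be a trajectory, and let ⟨v_i⟩ be a fixed path in the chain's transition graph with inf_i h(v_i) = m > 0. If Z is a trajectory of the chain started at some state x, then h(x) ≥ P_x(Z hits {v_i : i ≥ 0}) · m. -/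
open scoped Classical

/-- `hitProbBy P A n u` is the probability that the chain started at `u` visits the set `A`
within `n` steps; its supremum over `n` is the hitting probability `P_u(hit A)`. -/
noncomputable def hitProbBy {V : Type*} (P : V → V → ℝ) (A : Set V) : ℕ → V → ℝ
  | 0, u => if u ∈ A then 1 else 0
  | n + 1, u => if u ∈ A then 1 else ∑' w, P u w * hitProbBy P A n w

/-- For a Markov chain with a state `ρ` from which every state is reachable,
a bounded (nonnegative) harmonic function `h`, and a path `⟨v_i⟩` of the chain with
`inf_i h(v_i) = m > 0`, a trajectory from any state `x` hits `{v_i}` with probability at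
most `h(x)/m`; that is, `h(x) ≥ P_x(hit {v_i}) · m`. -/
theorem harmonic_ge_hitting_prob_mul_inf {V : Type*} [Countable V]
    (P : V → V → ℝ) (hP0 : ∀ u v, 0 ≤ P u v) (hP1 : ∀ u, HasSum (P u) 1)
    (ρ : V)
    (hreach : ∀ u : V, ∃ (k : ℕ) (w : ℕ → V), w 0 = ρ ∧ w k = u ∧
      ∀ i < k, 0 < P (w i) (w (i + 1)))
    (h : V → ℝ) (C : ℝ) (hbd : ∀ u, |h u| ≤ C) (hpos : ∀ u, 0 ≤ h u)
    (hharm : ∀ u, HasSum (fun y => P u y * h y) (h u))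
    (v : ℕ → V) (hpath : ∀ i, 0 < P (v i) (v (i + 1)))
    (m : ℝ) (hm : 0 < m) (hinf : ∀ i, m ≤ h (v i)) :
    ∀ x : V, (⨆ n, hitProbBy P (Set.range v) n x) * m ≤ h x := by
  set A := Set.range v with hA
  have hnn : ∀ n x, 0 ≤ hitProbBy P A n x := by
    intro n
    induction n with
    | zero => intro x; simp only [hitProbBy]; split <;> norm_num
    | succ n ih =>
      intro x
      simp only [hitProbBy]
      split
      · norm_num
      · exact tsum_nonneg fun w => mul_nonneg (hP0 x w) (ih w)
  have hmem : ∀ x ∈ A, m ≤ h x := by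
    rintro x ⟨i, rfl⟩; exact hinf i
  have key : ∀ n x, hitProbBy P A n x * m ≤ h x := by
    intro n
    induction n with
    | zero =>
      intro x
      simp only [hitProbBy]
      split
      · rw [one_mul]; exact hmem x ‹_›
      · rw [zero_mul]; exact hpos x
    | succ n ih =>
      intro x
      simp only [hitProbBy]
      split
      · rw [one_mul]; exact hmem x ‹_›
      · have hsumR : Summable (fun y => P x y * h y) := (hharm x).summable
        have hle : ∀ w, P x w * hitProbBy P A n w * m ≤ P x w * h w := by
          intro w
          rw [mul_assoc]
          exact mul_le_mul_of_nonneg_left (ih w) (hP0 x w)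
        have hsumL : Summable (fun w => P x w * hitProbBy P A n w * m) :=
          Summable.of_nonneg_of_le
            (fun w => mul_nonneg (mul_nonneg (hP0 x w) (hnn n w)) hm.le)
            hle hsumR
        calc (∑' w, P x w * hitProbBy P A n w) * m
            = ∑' w, P x w * hitProbBy P A n w * m := (tsum_mul_right).symm
          _ ≤ ∑' w, P x w * h w := Summable.tsum_le_tsum hle hsumL hsumR
          _ = h x := (hharm x).tsum_eq
  intro x
  rw [← le_div_iff₀ hm]
  exact ciSup_le fun n => (le_div_iff₀ hm).2 (key n x)
end

section
/- Let T be a simple proper plane triangulation with bounded local geometry (degrees at most M, conductances in [M⁻¹, M]) admitting a square tiling S_ρ in the cylinder ℝ/ηℤ × [0,1]. Then for every vertex v of T, length(I(v)) ≤ M²(1 − y(v)), where I(v) is the interval of v in the tiling and y(v) is its height. -/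
open MeasureTheory

/-- For a simple proper plane triangulation with bounded local geometry
(degrees at most `M`, conductances in `[M⁻¹, M]`) with square tiling in the cylinder
`ℝ/ηℤ × [0,1]`, every vertex `v` satisfies `length(I(v)) ≤ M²(1 − y(v))`.
The tiling is encoded by its defining properties: `Iedge u v` is the interval of the
rectangle of the edge `(u,v)` (with `length(I(e)) = c(e)(y(e⁺) − y(e⁻))` for upward
oriented edges), and the interval `Ivert v` of a vertex is covered by the intervals of
the rectangles adjacent to it from above. -/
theorem squareTiling_interval_length_le {V : Type*} (G : SimpleGraph V)
    [∀ v, Fintype (G.neighborSet v)]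
    (η : ℝ) [Fact (0 < η)] (ρ : V)
    (c : V → V → ℝ) (y : V → ℝ)
    (Iedge : V → V → Set (AddCircle η)) (Ivert : V → Set (AddCircle η))
    (M : ℝ) (hM : 1 ≤ M)
    (hdeg : ∀ v, (G.degree v : ℝ) ≤ M)
    (hcL : ∀ u v, G.Adj u v → M⁻¹ ≤ c u v) (hcU : ∀ u v, G.Adj u v → c u v ≤ M)
    (hy0 : ∀ v, 0 ≤ y v) (hy1 : ∀ v, y v ≤ 1) (hyρ : y ρ = 0)
    (hIsymm : ∀ u v, Iedge u v = Iedge v u)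
    (hlen : ∀ u v, G.Adj u v → y u ≤ y v →
      volume (Iedge u v) = ENNReal.ofReal (c u v * (y v - y u)))
    (hcover : ∀ v, Ivert v ⊆ ⋃ u ∈ {u | G.Adj v u ∧ y v ≤ y u}, Iedge v u) :
    ∀ v, volume (Ivert v) ≤ ENNReal.ofReal (M ^ 2 * (1 - y v)) := by
  intro v
  classical
  set S : Finset V := (G.neighborFinset v).filter (fun u => y v ≤ y u) with hS
  have hsub : (⋃ u ∈ {u | G.Adj v u ∧ y v ≤ y u}, Iedge v u)
      = ⋃ u ∈ S, Iedge v u := by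
    ext x
    simp [hS, SimpleGraph.mem_neighborFinset]
  calc volume (Ivert v) ≤ volume (⋃ u ∈ S, Iedge v u) := by
        rw [← hsub]; exact measure_mono (hcover v)
    _ ≤ ∑ u ∈ S, volume (Iedge v u) := measure_biUnion_finset_le S _
    _ ≤ ∑ u ∈ S, ENNReal.ofReal (M * (1 - y v)) := by
        apply Finset.sum_le_sum
        intro u hu
        have hmem := hu
        rw [hS, Finset.mem_filter, SimpleGraph.mem_neighborFinset] at hmem
        obtain ⟨hadj, hyle⟩ := hmem
        rw [hlen v u hadj hyle]
        apply ENNReal.ofReal_le_ofReal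
        have h1 : c v u ≤ M := hcU v u hadj
        have h2 : y u - y v ≤ 1 - y v := by linarith [hy1 u]
        have h3 : 0 ≤ y u - y v := by linarith
        have h4 : 0 ≤ c v u := le_trans (inv_nonneg.mpr (by linarith)) (hcL v u hadj)
        nlinarith
    _ = (S.card : ENNReal) * ENNReal.ofReal (M * (1 - y v)) := by
        rw [Finset.sum_const, nsmul_eq_mul]
    _ ≤ ENNReal.ofReal (M ^ 2 * (1 - y v)) := by
        have hcard : (S.card : ℝ) ≤ M := by
          refine le_trans ?_ (hdeg v)
          exact_mod_cast Finset.card_filter_le _ _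
        rw [← ENNReal.ofReal_natCast, ← ENNReal.ofReal_mul (by positivity)]
        apply ENNReal.ofReal_le_ofReal
        have h2 : 0 ≤ 1 - y v := by linarith [hy1 v]
        have hMn : (0:ℝ) ≤ M := by linarith
        nlinarith [mul_le_mul_of_nonneg_right hcard (mul_nonneg hMn h2)]
end

section
/- Let T be a simple proper plane triangulation with bounded local geometry (bound M) with square tiling S_ρ in ℝ/ηℤ × [0,1]. Then for every oriented edge e of T, |y(e⁺) − y(e⁻)| ≤ M³ (1 − y(e⁻)). -/
open MeasureTheory

/-- For a simple proper plane triangulation with bounded local geometry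
(bound `M`) with square tiling in `ℝ/ηℤ × [0,1]`, every oriented edge `e` satisfies
`|y(e⁺) − y(e⁻)| ≤ M³ (1 − y(e⁻))`. The tiling is encoded by its defining properties:
rectangle lengths `length(I(e)) = c(e)(y(e⁺) − y(e⁻))`, the inclusion `I(e) ⊆ I(e⁻)`, and
the covering of `I(v)` by the intervals of the rectangles adjacent to it from above. -/
theorem squareTiling_height_increment_le {V : Type*} (G : SimpleGraph V)
    [∀ v, Fintype (G.neighborSet v)]
    (η : ℝ) [Fact (0 < η)] (ρ : V)
    (c : V → V → ℝ) (y : V → ℝ)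
    (Iedge : V → V → Set (AddCircle η)) (Ivert : V → Set (AddCircle η))
    (M : ℝ) (hM : 1 ≤ M)
    (hdeg : ∀ v, (G.degree v : ℝ) ≤ M)
    (hcL : ∀ u v, G.Adj u v → M⁻¹ ≤ c u v) (hcU : ∀ u v, G.Adj u v → c u v ≤ M)
    (hy0 : ∀ v, 0 ≤ y v) (hy1 : ∀ v, y v ≤ 1) (hyρ : y ρ = 0)
    (hIsymm : ∀ u v, Iedge u v = Iedge v u)
    (hlen : ∀ u v, G.Adj u v → y u ≤ y v →
      volume (Iedge u v) = ENNReal.ofReal (c u v * (y v - y u)))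
    (hsub : ∀ u v, G.Adj u v → Iedge u v ⊆ Ivert u)
    (hcover : ∀ v, Ivert v ⊆ ⋃ u ∈ {u | G.Adj v u ∧ y v ≤ y u}, Iedge v u) :
    ∀ u v, G.Adj u v → |y v - y u| ≤ M ^ 3 * (1 - y u) := by
  have hM0 : (0 : ℝ) < M := lt_of_lt_of_le one_pos hM
  -- Bound on the measure of Ivert u: volume (Ivert u) ≤ M^2 * (1 - y u)
  have hIvert : ∀ u, volume (Ivert u) ≤ ENNReal.ofReal (M ^ 2 * (1 - y u)) := by
    intro u
    have h1u : (0 : ℝ) ≤ 1 - y u := sub_nonneg.2 (hy1 u)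
    set S : Finset V := (G.neighborFinset u).filter (fun w => y u ≤ y w) with hS
    have hcov2 : Ivert u ⊆ ⋃ w ∈ (S : Set V), Iedge u w := by
      refine (hcover u).trans ?_
      apply Set.iUnion₂_subset
      intro w hw
      have hwS : w ∈ S := by
        simp only [hS, Finset.mem_filter, SimpleGraph.mem_neighborFinset]
        exact hw
      exact Set.subset_biUnion_of_mem (u := fun w => Iedge u w) hwS
    calc volume (Ivert u) ≤ volume (⋃ w ∈ (S : Set V), Iedge u w) :=
          measure_mono hcov2
      _ ≤ ∑ w ∈ S, volume (Iedge u w) := MeasureTheory.measure_biUnion_finset_le S _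
      _ ≤ ∑ w ∈ S, ENNReal.ofReal (M * (1 - y u)) := by
          apply Finset.sum_le_sum
          intro w hw
          simp only [hS, Finset.mem_filter, SimpleGraph.mem_neighborFinset] at hw
          rw [hlen u w hw.1 hw.2]
          apply ENNReal.ofReal_le_ofReal
          have : y w - y u ≤ 1 - y u := by linarith [hy1 w]
          have hc0 : 0 ≤ c u w := le_trans (inv_nonneg.2 hM0.le) (hcL u w hw.1)
          have := hcU u w hw.1
          nlinarith [sub_nonneg.2 hw.2]
      _ = (S.card : ENNReal) * ENNReal.ofReal (M * (1 - y u)) := by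
          rw [Finset.sum_const, nsmul_eq_mul]
      _ ≤ ENNReal.ofReal (M ^ 2 * (1 - y u)) := by
          have hcard : (S.card : ℝ) ≤ M := by
            refine le_trans ?_ (hdeg u)
            rw [← SimpleGraph.card_neighborFinset_eq_degree]
            exact_mod_cast Finset.card_filter_le _ _
          calc (S.card : ENNReal) * ENNReal.ofReal (M * (1 - y u))
              = ENNReal.ofReal (S.card : ℝ) * ENNReal.ofReal (M * (1 - y u)) := by
                rw [ENNReal.ofReal_natCast]
            _ = ENNReal.ofReal ((S.card : ℝ) * (M * (1 - y u))) := by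
                rw [ENNReal.ofReal_mul (Nat.cast_nonneg _)]
            _ ≤ ENNReal.ofReal (M ^ 2 * (1 - y u)) := by
                apply ENNReal.ofReal_le_ofReal
                nlinarith [mul_le_mul_of_nonneg_right hcard (mul_nonneg hM0.le h1u)]
  -- Key: for adjacent a b with y a ≤ y b and Iedge a b ⊆ Ivert u,
  -- c a b * (y b - y a) ≤ M^2 * (1 - y u)
  have key : ∀ a b u, G.Adj a b → y a ≤ y b → Iedge a b ⊆ Ivert u →
      c a b * (y b - y a) ≤ M ^ 2 * (1 - y u) := by
    intro a b u hab hy hsubu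
    have h1u : (0 : ℝ) ≤ M ^ 2 * (1 - y u) := by
      have := sub_nonneg.2 (hy1 u); positivity
    have := (measure_mono hsubu).trans (hIvert u)
    rw [hlen a b hab hy] at this
    exact (ENNReal.ofReal_le_ofReal_iff h1u).1 this
  have arith : ∀ d cc t : ℝ, 0 ≤ d → M⁻¹ ≤ cc → cc * d ≤ M ^ 2 * t → d ≤ M ^ 3 * t := by
    intro d cc t hd hcc h
    have h1 : 1 ≤ M * cc := by
      calc (1 : ℝ) = M * M⁻¹ := (mul_inv_cancel₀ hM0.ne').symm
        _ ≤ M * cc := by nlinarith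
    have h2 : d ≤ M * (cc * d) := by nlinarith
    have h3 : M * (cc * d) ≤ M * (M ^ 2 * t) := by nlinarith
    nlinarith
  intro u v huv
  rcases le_total (y u) (y v) with h | h
  · have := key u v u huv h (hsub u v huv)
    rw [abs_of_nonneg (sub_nonneg.2 h)]
    exact arith _ _ _ (sub_nonneg.2 h) (hcL u v huv) this
  · have hsub' : Iedge v u ⊆ Ivert u := by rw [hIsymm v u]; exact hsub u v huv
    have := key v u u huv.symm h hsub'
    rw [abs_of_nonpos (sub_nonpos.2 h)]
    have := arith _ _ _ (sub_nonneg.2 h) (hcL v u huv.symm) this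
    linarith
end

section
/- Let ⟨X_n⟩ and ⟨Y_n⟩ be independent transient random walks on a network G started at ρ, and for each k let ⟨Z^k_m⟩ be a random walk started at X_k, conditionally independent of ⟨X_n⟩ and ⟨Y_n⟩ given X_k. Then P(⟨Z^k_m⟩ hits {Y_n : n ≥ 0} | ⟨X_n⟩, ⟨Y_n⟩) → 0 almost surely as k → ∞, provided ⟨X_n⟩ almost surely hits {Y_n : n ≥ 0} only finitely often. -/
open MeasureTheory Filter

/-! Let `A j` be the event that `X` hits the trace of `Y` at some time `≥ j`. By Lévy's upward
theorem, for fixed `j` the conditional probabilities `P(A j | ℱ k)` converge a.s. to the indicator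
of `A j`. Since the `A j` decrease, `0 ≤ P(A k | ℱ k) ≤ P(A j | ℱ k)` for `j ≤ k`; choosing `j`
beyond the last hit, which exists a.s. by the finite-hitting assumption, gives the limit `0`. -/

section LevyDecreasing

variable {Ω : Type*} {m0 : MeasurableSpace Ω} {μ : Measure Ω} [IsFiniteMeasure μ]

theorem ae_tendsto_zero_condExp_indicator_of_antitone (ℱ : Filtration ℕ m0) {A : ℕ → Set Ω}
    (hA : Antitone A) (hAmeas : ∀ j, MeasurableSet[⨆ k, ℱ k] (A j))
    (hAeventually : ∀ᵐ ω ∂μ, ∃ j, ω ∉ A j) :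
    ∀ᵐ ω ∂μ, Tendsto (fun k => (μ[(A k).indicator (fun _ => (1 : ℝ)) | ℱ k]) ω)
      atTop (nhds 0) := by
  set g : ℕ → Ω → ℝ := fun j => (A j).indicator fun _ => 1
  have hsup_le : ⨆ k, ℱ k ≤ m0 := iSup_le ℱ.le
  have hg_int : ∀ j, Integrable (g j) μ := fun j =>
    (integrable_const (1 : ℝ)).indicator (hsup_le _ (hAmeas j))
  have levy : ∀ᵐ ω ∂μ, ∀ j, Tendsto (fun k => (μ[g j | ℱ k]) ω) atTop (nhds (g j ω)) :=
    ae_all_iff.2 fun j =>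
      (hg_int j).tendsto_ae_condExp (stronglyMeasurable_const.indicator (hAmeas j))
  have nonneg : ∀ᵐ ω ∂μ, ∀ k, 0 ≤ (μ[g k | ℱ k]) ω :=
    ae_all_iff.2 fun k =>
      condExp_nonneg (.of_forall (Set.indicator_nonneg fun _ _ => zero_le_one))
  have mono : ∀ᵐ ω ∂μ, ∀ j k, j ≤ k → (μ[g k | ℱ k]) ω ≤ (μ[g j | ℱ k]) ω := by
    refine ae_all_iff.2 fun j => ae_all_iff.2 fun k => ?_
    by_cases hjk : j ≤ k
    · exact (condExp_mono (hg_int k) (hg_int j) (.of_forall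
        (Set.indicator_le_indicator_of_subset (hA hjk) fun _ => zero_le_one))).mono
        fun _ hω _ => hω
    · exact .of_forall fun _ h => absurd h hjk
  filter_upwards [levy, nonneg, mono, hAeventually] with ω hlevy hnonneg hmono ⟨j, hj⟩
  have hlim : Tendsto (fun k => (μ[g j | ℱ k]) ω) atTop (nhds 0) := by
    simpa [g, Set.indicator_of_notMem hj] using hlevy j
  exact squeeze_zero' (.of_forall hnonneg) (eventually_atTop.2 ⟨j, hmono j⟩) hlim

end LevyDecreasing

section Trace

variable {Ω V : Type*} {m0 : MeasurableSpace Ω}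

def hitsTraceFrom (X Y : ℕ → Ω → V) (k : ℕ) : Set Ω :=
  {ω | ∃ n, k ≤ n ∧ ∃ m, X n ω = Y m ω}

theorem hitsTraceFrom_antitone (X Y : ℕ → Ω → V) : Antitone (hitsTraceFrom X Y) :=
  fun _ _ hjk _ ⟨n, hn, hhit⟩ => ⟨n, hjk.trans hn, hhit⟩

theorem exists_notMem_hitsTraceFrom {X Y : ℕ → Ω → V} {ω : Ω}
    (hfin : {n : ℕ | ∃ m, X n ω = Y m ω}.Finite) : ∃ k, ω ∉ hitsTraceFrom X Y k := by
  obtain ⟨N, hN⟩ := hfin.bddAbove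
  exact ⟨N + 1, fun ⟨n, hn, hhit⟩ => absurd (hN hhit) (by omega)⟩

variable [MeasurableSpace V]

def pastAndTraceFiltration (X Y : ℕ → Ω → V) (hX : ∀ n, Measurable (X n))
    (hY : ∀ n, Measurable (Y n)) : Filtration ℕ m0 where
  seq k := (⨆ i ∈ Finset.range (k + 1), MeasurableSpace.comap (X i) inferInstance) ⊔
    MeasurableSpace.comap (fun ω m => Y m ω) inferInstance
  mono' _ _ hkl := sup_le_sup_right
    (biSup_mono fun _ hi => Finset.mem_range.2 <| (Finset.mem_range.1 hi).trans_le (by omega)) _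
  le' _ := sup_le (iSup₂_le fun i _ => (hX i).comap_le) (measurable_pi_lambda _ hY).comap_le

variable {X Y : ℕ → Ω → V} (hX : ∀ n, Measurable (X n)) (hY : ∀ n, Measurable (Y n))

theorem measurable_iSup_pastAndTraceFiltration_left (n : ℕ) :
    Measurable[⨆ k, pastAndTraceFiltration X Y hX hY k] (X n) := by
  refine Measurable.of_comap_le (le_trans ?_ (le_iSup _ n))
  exact (le_biSup (fun i => MeasurableSpace.comap (X i) inferInstance)
    (Finset.self_mem_range_succ n)).trans le_sup_left

theorem measurable_iSup_pastAndTraceFiltration_right (m : ℕ) :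
    Measurable[⨆ k, pastAndTraceFiltration X Y hX hY k] (Y m) := by
  have hYseq : Measurable[⨆ k, pastAndTraceFiltration X Y hX hY k] fun ω (m : ℕ) => Y m ω :=
    Measurable.of_comap_le ((le_sup_right : _ ≤ pastAndTraceFiltration X Y hX hY 0).trans
      (le_iSup (pastAndTraceFiltration X Y hX hY) 0))
  exact (measurable_pi_apply m).comp hYseq

theorem measurableSet_iSup_pastAndTraceFiltration_hitsTraceFrom [MeasurableEq V] (k : ℕ) :
    MeasurableSet[⨆ k, pastAndTraceFiltration X Y hX hY k] (hitsTraceFrom X Y k) := by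
  have hunion : hitsTraceFrom X Y k = ⋃ n, ⋃ (_ : k ≤ n), ⋃ m, {ω | X n ω = Y m ω} := by
    ext ω
    simp [hitsTraceFrom]
  rw [hunion]
  exact .iUnion fun n => .iUnion fun _ => .iUnion fun m =>
    measurableSet_eq_fun (measurable_iSup_pastAndTraceFiltration_left hX hY n)
      (measurable_iSup_pastAndTraceFiltration_right hX hY m)

end Trace

/-- Let `⟨X_n⟩, ⟨Y_n⟩` be independent transient random walks started at `ρ`.
By the Markov property, the probability that a fresh walk `⟨Z^k_m⟩` started at `X_k`
(conditionally independent given `X_k`) hits the trace `{Y_n}` equals the conditional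
probability `P(⟨X_m⟩_{m ≥ k} hits {Y_n} | X_0,…,X_k, ⟨Y_n⟩)`. If a.s. `⟨X_n⟩` hits
`{Y_n}` only finitely often, then this conditional probability tends to `0` a.s. -/
theorem condexp_hits_trace_tendsto_zero {Ω V : Type*} [MeasurableSpace Ω]
    [MeasurableSpace V] [MeasurableSingletonClass V] [Countable V]
    (μ : Measure Ω) [IsProbabilityMeasure μ]
    (X : ℕ → Ω → V) (Y : ℕ → Ω → V)
    (hX : ∀ n, Measurable (X n)) (hY : ∀ n, Measurable (Y n))
    (hfin : ∀ᵐ ω ∂μ, {n : ℕ | ∃ m, X n ω = Y m ω}.Finite) :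
    ∀ᵐ ω ∂μ, Tendsto
      (fun k =>
        (μ[Set.indicator {ω' | ∃ n, k ≤ n ∧ ∃ m, X n ω' = Y m ω'} (fun _ => (1 : ℝ)) |
          (⨆ i ∈ Finset.range (k + 1), MeasurableSpace.comap (X i) inferInstance) ⊔
            MeasurableSpace.comap (fun ω' => (fun m => Y m ω')) inferInstance]) ω)
      atTop (nhds 0) :=
  ae_tendsto_zero_condExp_indicator_of_antitone (pastAndTraceFiltration X Y hX hY)
    (hitsTraceFrom_antitone X Y)
    (measurableSet_iSup_pastAndTraceFiltration_hitsTraceFrom hX hY)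
    (hfin.mono fun _ => exists_notMem_hitsTraceFrom)
end
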